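/- arXiv:1412.3057 — 2 statements merged into one kernel-verified Lean document; each statement's English description precedes it below -/
import Mathlib

section
/- The forward Euler map for the discrete obstacle operator is nonexpansive in the maximum norm under the same CFL condition: with F_i[u] = min(\bar{w}_i u_i − Σ_j w_j u_j, u_i − g_i) and 0 < dt ≤ 1/(1 + \bar{w}_i), the map (E u)_i = u_i − dt F_i[u] satisfies ‖E u − E v‖_∞ ≤ ‖u − v‖_∞. -/
/-!
Since `dt ≥ 0`, `uᵢ - dt · min(a, b) = max(uᵢ - dt · a, uᵢ - dt · b)`, and a maximum of two
maps is nonexpansive in the max norm as soon as each of them is. Both branches are affine maps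
`u ↦ α uᵢ + Σ_j γ_j u_j + const` with nonnegative coefficients: the diffusion branch has
`α = 1 - dt w̄ᵢ`, `γ_j = dt wᵢⱼ`, and the obstacle branch has `α = 1 - dt`, `γ = 0`. The CFL
condition makes these coefficients nonnegative with total mass at most `1`, which is exactly
what nonexpansiveness needs.
-/

open Finset

section

variable {ι : Type*} [Fintype ι]

lemma abs_mul_add_sum_mul_le_norm (s : Finset ι) {a : ℝ} {c : ι → ℝ} (ha : 0 ≤ a)
    (hc : ∀ j ∈ s, 0 ≤ c j) (x : ι → ℝ) (i : ι) :
    |a * x i + ∑ j ∈ s, c j * x j| ≤ (a + ∑ j ∈ s, c j) * ‖x‖ := by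
  have hx : ∀ j, |x j| ≤ ‖x‖ := norm_le_pi_norm x
  calc |a * x i + ∑ j ∈ s, c j * x j|
      ≤ |a * x i| + ∑ j ∈ s, |c j * x j| :=
        (abs_add_le _ _).trans (add_le_add_right (abs_sum_le_sum_abs _ _) _)
    _ ≤ a * ‖x‖ + ∑ j ∈ s, c j * ‖x‖ := by
        gcongr with j hj
        · rw [abs_mul, abs_of_nonneg ha]
          exact mul_le_mul_of_nonneg_left (hx i) ha
        · rw [abs_mul, abs_of_nonneg (hc j hj)]
          exact mul_le_mul_of_nonneg_left (hx j) (hc j hj)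
    _ = (a + ∑ j ∈ s, c j) * ‖x‖ := by rw [add_mul, sum_mul]

lemma abs_diffusion_step_sub_le (s : Finset ι) {c : ι → ℝ} (hc : ∀ j ∈ s, 0 ≤ c j)
    {dt : ℝ} (hdt : 0 ≤ dt) (hCFL : dt * ∑ j ∈ s, c j ≤ 1) (u v : ι → ℝ) (i : ι) :
    |(u i - dt * ((∑ j ∈ s, c j) * u i - ∑ j ∈ s, c j * u j)) -
        (v i - dt * ((∑ j ∈ s, c j) * v i - ∑ j ∈ s, c j * v j))| ≤ ‖u - v‖ := by
  have hrw : (u i - dt * ((∑ j ∈ s, c j) * u i - ∑ j ∈ s, c j * u j)) -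
        (v i - dt * ((∑ j ∈ s, c j) * v i - ∑ j ∈ s, c j * v j)) =
      (1 - dt * ∑ j ∈ s, c j) * (u - v) i + ∑ j ∈ s, (dt * c j) * (u - v) j := by
    simp only [Pi.sub_apply, mul_sub, sum_sub_distrib, ← mul_sum, mul_assoc]
    ring
  have hbound := abs_mul_add_sum_mul_le_norm s (sub_nonneg.2 hCFL)
    (fun j hj => mul_nonneg hdt (hc j hj)) (u - v) i
  rwa [← mul_sum, sub_add_cancel, one_mul, ← hrw] at hbound

lemma abs_obstacle_step_sub_le {dt : ℝ} (hdt : 0 ≤ dt) (hdt_le : dt ≤ 1) (g : ℝ)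
    (u v : ι → ℝ) (i : ι) :
    |(u i - dt * (u i - g)) - (v i - dt * (v i - g))| ≤ ‖u - v‖ := by
  have hbound := abs_mul_add_sum_mul_le_norm ∅ (c := 0) (sub_nonneg.2 hdt_le) (by simp) (u - v) i
  simp only [sum_empty, add_zero, Pi.sub_apply] at hbound
  calc |(u i - dt * (u i - g)) - (v i - dt * (v i - g))|
      = |(1 - dt) * (u i - v i)| := by congr 1; ring
    _ ≤ (1 - dt) * ‖u - v‖ := hbound
    _ ≤ ‖u - v‖ := mul_le_of_le_one_left (norm_nonneg _) (by linarith)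

end

lemma sub_mul_min_eq_max {a b c dt : ℝ} (hdt : 0 ≤ dt) :
    a - dt * min b c = max (a - dt * b) (a - dt * c) := by
  rw [mul_min_of_nonneg b c hdt, max_sub_sub_left]

/-- The forward Euler map for the discrete obstacle operator
`Fᵢ[u] = min(w̄ᵢ uᵢ − Σ_j w_j u_j, uᵢ − gᵢ)` is nonexpansive in the maximum
norm under the CFL condition `0 < dt ≤ 1/(1 + w̄ᵢ)`. -/
theorem stmt11 {ι : Type*} [Fintype ι]
    (N : ι → Finset ι) (w : ι → ι → ℝ) (W : ι → ℝ) (g : ι → ℝ)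
    (hw : ∀ i j, 0 ≤ w i j) (hW : ∀ i, W i = ∑ j ∈ N i, w i j)
    (dt : ℝ) (hdt : 0 < dt) (hCFL : ∀ i, dt ≤ 1 / (1 + W i))
    (u v : ι → ℝ) :
    ‖(fun i => u i -
        dt * min (W i * u i - ∑ j ∈ N i, w i j * u j) (u i - g i)) -
      (fun i => v i -
        dt * min (W i * v i - ∑ j ∈ N i, w i j * v j) (v i - g i))‖ ≤
      ‖u - v‖ := by
  refine (pi_norm_le_iff_of_nonneg (norm_nonneg _)).2 fun i => ?_
  have hW_nonneg : 0 ≤ W i := hW i ▸ sum_nonneg fun j _ => hw i j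
  have hCFL_i : dt * (1 + W i) ≤ 1 := (le_div_iff₀ (by linarith)).1 (hCFL i)
  simp only [Pi.sub_apply, Real.norm_eq_abs, sub_mul_min_eq_max hdt.le]
  refine (abs_max_sub_max_le_max _ _ _ _).trans (max_le ?_ ?_)
  · rw [hW i]
    exact abs_diffusion_step_sub_le (N i) (fun j _ => hw i j) hdt.le
      (by rw [← hW i]; nlinarith) u v i
  · exact abs_obstacle_step_sub_le hdt.le (by nlinarith) (g i) u v i
end

section
/- Consistency of the dangling-node I-stencil: for u ∈ C⁴ near (x,y), the quantity (1/Δx²)(2u − (u(x+Δx,y+Δy)+u(x+Δx,y−Δy)+u(x−Δx,y+Δy)+u(x−Δx,y−Δy))/2) + (1/Δy² − 1/Δx²)(2u − u(x,y+Δy) − u(x,y−Δy)) equals −(∂²u/∂x² + ∂²u/∂y²)(x,y) plus an error of order O(Δx² + Δy⁴/Δx²) as Δx, Δy → 0 with Δy ≤ Δx. -/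
/-!
Along any direction `v`, Taylor expansion to third order at `q ± v` (the odd terms cancel) shows
that the central second difference `u (q + v) + u (q - v) - 2 u q` is `D²u(q)(v, v)` up to
`M ‖v‖⁴ / 12`. For the two diagonals `v ± w`, with `v = (Δx, 0)` and `w = (0, Δy)`, the mixed
terms of `D²u` cancel by the parallelogram identity, so the diagonal stencil yields
`Δx² u_xx + Δy² u_yy` up to `O(Δx⁴)` and the vertical one yields `Δy² u_yy` up to `O(Δy⁴)`.
With the weights `1/Δx²` and `1/Δy² - 1/Δx²` the `u_yy` contributions add up to exactly `u_yy`,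
and the remaining error is `O(Δx²) + O(Δy²) = O(Δx²)`.
-/

open Set Nat

variable {E F : Type*} [NormedAddCommGroup E] [NormedSpace ℝ E] [NormedAddCommGroup F]
  [NormedSpace ℝ F]

lemma iteratedDeriv_comp_add_smul {n : WithTop ℕ∞} {u : E → F} (hu : ContDiff ℝ n u) (q v : E)
    {k : ℕ} (hk : k ≤ n) (t : ℝ) :
    iteratedDeriv k (fun s : ℝ => u (q + s • v)) t =
      iteratedFDeriv ℝ k u (q + t • v) (fun _ => v) := by
  have hq : ContDiff ℝ n fun w => u (q + w) := hu.comp (contDiff_const.add contDiff_id)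
  set L := ContinuousLinearMap.smulRight (1 : ℝ →L[ℝ] ℝ) v
  have hline : (fun s : ℝ => u (q + s • v)) = (fun w => u (q + w)) ∘ L := rfl
  rw [iteratedDeriv_eq_iteratedFDeriv, hline, L.iteratedFDeriv_comp_right hq t hk,
    iteratedFDeriv_comp_add_left]
  simp [L]

lemma norm_iteratedDeriv_comp_add_smul_le {n : ℕ} {u : E → F} (hu : ContDiff ℝ n u) {M : ℝ}
    (hM : ∀ p, ‖iteratedFDeriv ℝ n u p‖ ≤ M) (q v : E) (t : ℝ) :
    ‖iteratedDeriv n (fun s : ℝ => u (q + s • v)) t‖ ≤ M * ‖v‖ ^ n := by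
  rw [iteratedDeriv_comp_add_smul hu q v le_rfl]
  calc _ ≤ ‖iteratedFDeriv ℝ n u (q + t • v)‖ * ∏ _i : Fin n, ‖v‖ :=
        (iteratedFDeriv ℝ n u (q + t • v)).le_opNorm _
    _ ≤ M * ‖v‖ ^ n := by
        rw [Finset.prod_const, Finset.card_fin]
        gcongr
        exact hM _

lemma ContDiff.exists_taylor_lagrange {f : ℝ → ℝ} {n : ℕ} (hf : ContDiff ℝ (n + 1) f)
    {x₀ x : ℝ} (hx : x₀ ≠ x) :
    ∃ ξ, f x = ∑ k ∈ Finset.range (n + 1), iteratedDeriv k f x₀ * (x - x₀) ^ k / k ! +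
      iteratedDeriv (n + 1) f ξ * (x - x₀) ^ (n + 1) / (n + 1)! := by
  obtain ⟨ξ, -, hξ⟩ := taylor_mean_remainder_lagrange_iteratedDeriv hx hf.contDiffOn
  refine ⟨ξ, ?_⟩
  suffices taylorWithinEval f n (uIcc x₀ x) x₀ x =
      ∑ k ∈ Finset.range (n + 1), iteratedDeriv k f x₀ * (x - x₀) ^ k / (k ! : ℝ) by
    rw [← hξ, this, add_sub_cancel]
  rw [taylor_within_apply]
  refine Finset.sum_congr rfl fun k hk => ?_
  have hkn : (k : WithTop ℕ∞) ≤ n + 1 := by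
    exact_mod_cast (Finset.mem_range_succ_iff.mp hk).trans n.le_succ
  rw [iteratedDerivWithin_eq_iteratedDeriv (uniqueDiffOn_uIcc hx) (hf.of_le hkn).contDiffAt
    left_mem_uIcc, smul_eq_mul]
  ring

lemma abs_add_add_sub_sub_iteratedDeriv_two_le {g : ℝ → ℝ} (hg : ContDiff ℝ 4 g) {K : ℝ}
    (hK : ∀ t, |iteratedDeriv 4 g t| ≤ K) (a h : ℝ) :
    |g (a + h) + g (a - h) - 2 * g a - h ^ 2 * iteratedDeriv 2 g a| ≤ K * h ^ 4 / 12 := by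
  rcases eq_or_ne h 0 with rfl | hh
  · simp [two_mul]
  obtain ⟨ξ₁, h₁⟩ := ContDiff.exists_taylor_lagrange (n := 3) hg (x₀ := a) (x := a + h)
    (fun e => hh (by linarith))
  obtain ⟨ξ₂, h₂⟩ := ContDiff.exists_taylor_lagrange (n := 3) hg (x₀ := a) (x := a - h)
    (fun e => hh (by linarith))
  have hsum : g (a + h) + g (a - h) - 2 * g a - h ^ 2 * iteratedDeriv 2 g a =
      (iteratedDeriv 4 g ξ₁ + iteratedDeriv 4 g ξ₂) * h ^ 4 / 24 := by
    rw [h₁, h₂]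
    simp only [Finset.sum_range_succ, Finset.sum_range_zero, Nat.factorial, iteratedDeriv_zero]
    push_cast
    ring
  rw [hsum, abs_div, abs_mul, abs_of_nonneg (by positivity : (0 : ℝ) ≤ h ^ 4),
    abs_of_pos (by norm_num : (0 : ℝ) < 24)]
  calc _ ≤ (K + K) * h ^ 4 / 24 := by
        gcongr
        exact (abs_add_le _ _).trans (add_le_add (hK ξ₁) (hK ξ₂))
    _ = K * h ^ 4 / 12 := by ring

lemma ContinuousLinearMap.parallelogram_law (L : E →L[ℝ] E →L[ℝ] F) (v w : E) :
    L (v + w) (v + w) + L (v - w) (v - w) = (2 : ℝ) • (L v v + L w w) := by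
  simp only [map_add, map_sub, add_apply, sub_apply]
  module

lemma abs_add_add_sub_sub_fderiv_fderiv_le {u : E → ℝ} (hu : ContDiff ℝ 4 u) {M : ℝ}
    (hM : ∀ p, ‖iteratedFDeriv ℝ 4 u p‖ ≤ M) (q v : E) :
    |u (q + v) + u (q - v) - 2 * u q - fderiv ℝ (fderiv ℝ u) q v v| ≤ M * ‖v‖ ^ 4 / 12 := by
  have hg : ContDiff ℝ 4 fun s : ℝ => u (q + s • v) :=
    hu.comp (contDiff_const.add (contDiff_id.smul contDiff_const))
  have h := abs_add_add_sub_sub_iteratedDeriv_two_le hg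
    (norm_iteratedDeriv_comp_add_smul_le hu hM q v) 0 1
  rw [iteratedDeriv_comp_add_smul hu q v (by norm_num), iteratedFDeriv_two_apply] at h
  simpa [sub_eq_add_neg] using h

lemma iteratedDeriv_two_comp_prodMk_left {u : ℝ × ℝ → ℝ} (hu : ContDiff ℝ 2 u) (x y : ℝ) :
    iteratedDeriv 2 (fun t => u (t, y)) x = fderiv ℝ (fderiv ℝ u) (x, y) (1, 0) (1, 0) := by
  have h := iteratedDeriv_comp_add_smul hu (0, y) (1, 0) le_rfl x
  simp only [Prod.smul_mk, smul_eq_mul, mul_one, mul_zero, Prod.mk_add_mk, zero_add,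
    add_zero] at h
  rw [h, iteratedFDeriv_two_apply]

lemma iteratedDeriv_two_comp_prodMk_right {u : ℝ × ℝ → ℝ} (hu : ContDiff ℝ 2 u) (x y : ℝ) :
    iteratedDeriv 2 (fun t => u (x, t)) y = fderiv ℝ (fderiv ℝ u) (x, y) (0, 1) (0, 1) := by
  have h := iteratedDeriv_comp_add_smul hu (x, 0) (0, 1) le_rfl y
  simp only [Prod.smul_mk, smul_eq_mul, mul_one, mul_zero, Prod.mk_add_mk, zero_add,
    add_zero] at h
  rw [h, iteratedFDeriv_two_apply]

lemma abs_diagonal_second_difference_sub_le {u : ℝ × ℝ → ℝ} (hu : ContDiff ℝ 4 u) {M : ℝ}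
    (hM : ∀ p, ‖iteratedFDeriv ℝ 4 u p‖ ≤ M) (x y Δx Δy : ℝ) :
    |u (x + Δx, y + Δy) + u (x + Δx, y - Δy) + u (x - Δx, y + Δy) + u (x - Δx, y - Δy)
        - 4 * u (x, y) - 2 * (Δx ^ 2 * iteratedDeriv 2 (fun t => u (t, y)) x
          + Δy ^ 2 * iteratedDeriv 2 (fun t => u (x, t)) y)|
      ≤ M * ‖((Δx, Δy) : ℝ × ℝ)‖ ^ 4 / 6 := by
  set L := fderiv ℝ (fderiv ℝ u) (x, y)
  have hxx : L (Δx, 0) (Δx, 0) = Δx ^ 2 * iteratedDeriv 2 (fun t => u (t, y)) x := by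
    rw [iteratedDeriv_two_comp_prodMk_left (hu.of_le (by norm_num)),
      show ((Δx, 0) : ℝ × ℝ) = Δx • (1, 0) by simp]
    simp only [map_smul, smul_apply, smul_eq_mul]; ring
  have hyy : L (0, Δy) (0, Δy) = Δy ^ 2 * iteratedDeriv 2 (fun t => u (x, t)) y := by
    rw [iteratedDeriv_two_comp_prodMk_right (hu.of_le (by norm_num)),
      show ((0, Δy) : ℝ × ℝ) = Δy • (0, 1) by simp]
    simp only [map_smul, smul_apply, smul_eq_mul]; ring
  have hpar := L.parallelogram_law (Δx, 0) (0, Δy)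
  have h₁ := abs_add_add_sub_sub_fderiv_fderiv_le hu hM (x, y) ((Δx, 0) + (0, Δy))
  have h₂ := abs_add_add_sub_sub_fderiv_fderiv_le hu hM (x, y) ((Δx, 0) - (0, Δy))
  simp only [Prod.mk_add_mk, Prod.mk_sub_mk, add_zero, zero_add, sub_zero, zero_sub,
    sub_neg_eq_add, ← sub_eq_add_neg] at h₁ h₂ hpar
  rw [show ‖((Δx, -Δy) : ℝ × ℝ)‖ = ‖((Δx, Δy) : ℝ × ℝ)‖ by simp [Prod.norm_def]] at h₂
  rw [smul_eq_mul, hxx, hyy] at hpar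
  calc _ = |(u (x + Δx, y + Δy) + u (x - Δx, y - Δy) - 2 * u (x, y) - L (Δx, Δy) (Δx, Δy))
        + (u (x + Δx, y - Δy) + u (x - Δx, y + Δy) - 2 * u (x, y) - L (Δx, -Δy) (Δx, -Δy))| := by
        congr 1; linear_combination hpar
    _ ≤ M * ‖((Δx, Δy) : ℝ × ℝ)‖ ^ 4 / 12 + M * ‖((Δx, Δy) : ℝ × ℝ)‖ ^ 4 / 12 :=
        (abs_add_le _ _).trans (add_le_add h₁ h₂)
    _ = M * ‖((Δx, Δy) : ℝ × ℝ)‖ ^ 4 / 6 := by ring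

lemma abs_vertical_second_difference_sub_le {u : ℝ × ℝ → ℝ} (hu : ContDiff ℝ 4 u) {M : ℝ}
    (hM : ∀ p, ‖iteratedFDeriv ℝ 4 u p‖ ≤ M) (x y Δy : ℝ) :
    |u (x, y + Δy) + u (x, y - Δy) - 2 * u (x, y)
        - Δy ^ 2 * iteratedDeriv 2 (fun t => u (x, t)) y| ≤ M * Δy ^ 4 / 12 := by
  have hK (t : ℝ) : |iteratedDeriv 4 (fun t => u (x, t)) t| ≤ M := by
    simpa using norm_iteratedDeriv_comp_add_smul_le hu hM (x, 0) (0, 1) t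
  exact abs_add_add_sub_sub_iteratedDeriv_two_le (hu.comp (contDiff_const.prodMk contDiff_id))
    hK y Δy

lemma abs_stencil_combination_le {u₀ D N S A B Δx Δy K : ℝ} (hΔy : 0 < Δy) (hle : Δy ≤ Δx)
    (hD : |D - 4 * u₀ - 2 * (Δx ^ 2 * A + Δy ^ 2 * B)| ≤ K * Δx ^ 4)
    (hV : |N + S - 2 * u₀ - Δy ^ 2 * B| ≤ K * Δy ^ 4) :
    |(1 / Δx ^ 2) * (2 * u₀ - D / 2) + (1 / Δy ^ 2 - 1 / Δx ^ 2) * (2 * u₀ - N - S) - -(A + B)|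
      ≤ 3 / 2 * K * Δx ^ 2 := by
  have hΔx : 0 < Δx := hΔy.trans_le hle
  have hK : 0 ≤ K := nonneg_of_mul_nonneg_left ((abs_nonneg _).trans hV) (by positivity)
  have hw : 0 ≤ 1 / Δy ^ 2 - 1 / Δx ^ 2 := by
    rw [sub_nonneg]; gcongr
  set eD := D - 4 * u₀ - 2 * (Δx ^ 2 * A + Δy ^ 2 * B)
  set eV := N + S - 2 * u₀ - Δy ^ 2 * B
  have hsplit : (1 / Δx ^ 2) * (2 * u₀ - D / 2) + (1 / Δy ^ 2 - 1 / Δx ^ 2) * (2 * u₀ - N - S)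
      - -(A + B) = -eD / (2 * Δx ^ 2) - (1 / Δy ^ 2 - 1 / Δx ^ 2) * eV := by
    simp only [eD, eV]; field_simp; ring
  rw [hsplit]
  calc _ ≤ |eD| / (2 * Δx ^ 2) + (1 / Δy ^ 2 - 1 / Δx ^ 2) * |eV| := by
        refine (abs_sub _ _).trans_eq ?_
        rw [abs_div, abs_neg, abs_of_pos (by positivity : (0 : ℝ) < 2 * Δx ^ 2), abs_mul,
          abs_of_nonneg hw]
    _ ≤ K * Δx ^ 4 / (2 * Δx ^ 2) + 1 / Δy ^ 2 * (K * Δy ^ 4) := by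
        gcongr; linarith [one_div_nonneg.mpr (sq_nonneg Δx)]
    _ = K * Δx ^ 2 / 2 + K * Δy ^ 2 := by field_simp
    _ ≤ 3 / 2 * K * Δx ^ 2 := by
        nlinarith [mul_le_mul_of_nonneg_left (pow_le_pow_left₀ hΔy.le hle 2) hK]

/-- Consistency of the dangling-node I-stencil: for `u` C⁴ with bounded fourth
derivative, the I-stencil approximates `−(∂²u/∂x² + ∂²u/∂y²)(x,y)` with error
`O(Δx² + Δy⁴/Δx²)` for `0 < Δy ≤ Δx`. -/
theorem stmt14 (u : ℝ × ℝ → ℝ) (x y M : ℝ)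
    (hu : ContDiff ℝ 4 u)
    (hM : ∀ p : ℝ × ℝ, ‖iteratedFDeriv ℝ 4 u p‖ ≤ M) :
    ∃ C : ℝ, ∀ Δx Δy : ℝ, 0 < Δy → Δy ≤ Δx →
      |(1 / Δx ^ 2) *
          (2 * u (x, y) -
            (u (x + Δx, y + Δy) + u (x + Δx, y - Δy) +
              u (x - Δx, y + Δy) + u (x - Δx, y - Δy)) / 2) +
        (1 / Δy ^ 2 - 1 / Δx ^ 2) *
          (2 * u (x, y) - u (x, y + Δy) - u (x, y - Δy)) -
        (-(iteratedDeriv 2 (fun t => u (t, y)) x +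
            iteratedDeriv 2 (fun t => u (x, t)) y))| ≤
      C * (Δx ^ 2 + Δy ^ 4 / Δx ^ 2) := by
  have hM₀ : 0 ≤ M := (norm_nonneg _).trans (hM 0)
  refine ⟨M / 4, fun Δx Δy hΔy hle => ?_⟩
  have hnorm : ‖((Δx, Δy) : ℝ × ℝ)‖ = Δx := by
    simp [Prod.norm_def, abs_of_pos hΔy, abs_of_pos (hΔy.trans_le hle), hle]
  have hD := abs_diagonal_second_difference_sub_le hu hM x y Δx Δy
  have hV := abs_vertical_second_difference_sub_le hu hM x y Δy
  rw [hnorm] at hD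
  calc _ ≤ 3 / 2 * (M / 6) * Δx ^ 2 := by
        refine abs_stencil_combination_le hΔy hle (hD.trans_eq (by ring)) (hV.trans ?_)
        linarith [mul_nonneg hM₀ (pow_pos hΔy 4).le]
    _ ≤ M / 4 * (Δx ^ 2 + Δy ^ 4 / Δx ^ 2) := by
        rw [show 3 / 2 * (M / 6) = M / 4 by ring]
        gcongr
        exact le_add_of_nonneg_right (by positivity)
end
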